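/- arXiv:math/0510246 — 9 statements merged into one kernel-verified Lean document; each statement's English description precedes it below -/
import Mathlib

section
/- Let Γ, Γ' be n×n adjacency matrices over GF(2) and let A, B, C, D be n×n diagonal matrices over GF(2) with AD + BC = I. If Γ' C Γ + A Γ + Γ' D + B = 0, then CΓ + D is invertible and (AΓ + B)(CΓ + D)^{-1} = Γ'. -/
/-!
Since `Γ'` solves the bilinear relation, `Γ' (CΓ + D) = AΓ + B`. Multiplying by `C` on the left
and using that the diagonal matrices commute, `(A - CΓ') (CΓ + D) = AD - BC = 1`, so `CΓ + D` has
a left inverse, hence is invertible, and then `Γ' = (AΓ + B)(CΓ + D)⁻¹`.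
-/

open Matrix

namespace Matrix

variable {ι R : Type*}

theorem neg_eq_self_of_charTwo {m : Type*} [Ring R] [CharP R 2] (M : Matrix m ι R) : -M = M := by
  ext i j
  exact CharTwo.neg_eq (M i j)

variable [Fintype ι] [DecidableEq ι] [CommRing R]

theorem sub_mul_mul_add_eq_one {A B C D Γ Γ' : Matrix ι ι R} (hAC : Commute A C)
    (hQ : A * D - C * B = 1) (h : Γ' * (C * Γ + D) = A * Γ + B) :
    (A - C * Γ') * (C * Γ + D) = 1 :=
  calc (A - C * Γ') * (C * Γ + D) = A * (C * Γ) + A * D - C * (Γ' * (C * Γ + D)) := by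
        noncomm_ring
    _ = (A * C - C * A) * Γ + (A * D - C * B) := by rw [h]; noncomm_ring
    _ = 1 := by rw [hAC.eq, sub_self, zero_mul, zero_add, hQ]

theorem isUnit_and_mul_inv_eq_of_mul_eq {A B C D Γ Γ' : Matrix ι ι R} (hAC : Commute A C)
    (hQ : A * D - C * B = 1) (h : Γ' * (C * Γ + D) = A * Γ + B) :
    IsUnit (C * Γ + D) ∧ (A * Γ + B) * (C * Γ + D)⁻¹ = Γ' := by
  have hdet : IsUnit (C * Γ + D).det :=
    isUnit_det_of_left_inverse (sub_mul_mul_add_eq_one hAC hQ h)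
  refine ⟨(isUnit_iff_isUnit_det _).mpr hdet, ?_⟩
  rw [← h, mul_assoc, mul_nonsing_inv _ hdet, mul_one]

end Matrix

theorem lft_of_bilinear_general {n : ℕ} (Γ Γ' : Matrix (Fin n) (Fin n) (ZMod 2))
    (a b c d : Fin n → ZMod 2)
    (hQ : diagonal a * diagonal d + diagonal b * diagonal c = 1)
    (hrel : Γ' * diagonal c * Γ + diagonal a * Γ + Γ' * diagonal d + diagonal b = 0) :
    IsUnit (diagonal c * Γ + diagonal d) ∧
      (diagonal a * Γ + diagonal b) * (diagonal c * Γ + diagonal d)⁻¹ = Γ' := by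
  have hcomm : ∀ x y : Fin n → ZMod 2, Commute (diagonal x) (diagonal y) := fun x y => by
    simp only [Commute, SemiconjBy, diagonal_mul_diagonal, mul_comm]
  refine isUnit_and_mul_inv_eq_of_mul_eq (hcomm a c) ?_ ?_
  · rw [sub_eq_add_neg, neg_eq_self_of_charTwo, (hcomm c b).eq, hQ]
  · have hsum : Γ' * (diagonal c * Γ + diagonal d) + (diagonal a * Γ + diagonal b) = 0 := by
      rw [← hrel]; noncomm_ring
    rw [eq_neg_of_add_eq_zero_left hsum, neg_eq_self_of_charTwo]

theorem lft_of_bilinear {n : ℕ} (Γ Γ' : Matrix (Fin n) (Fin n) (ZMod 2))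
    (a b c d : Fin n → ZMod 2)
    (hsym : Γᵀ = Γ) (hdiag : ∀ i, Γ i i = 0)
    (hsym' : Γ'ᵀ = Γ') (hdiag' : ∀ i, Γ' i i = 0)
    (hQ : diagonal a * diagonal d + diagonal b * diagonal c = 1)
    (hrel : Γ' * diagonal c * Γ + diagonal a * Γ + Γ' * diagonal d + diagonal b = 0) :
    IsUnit (diagonal c * Γ + diagonal d) ∧
      (diagonal a * Γ + diagonal b) * (diagonal c * Γ + diagonal d)⁻¹ = Γ' :=
  lft_of_bilinear_general Γ Γ' a b c d hQ hrel
end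

section
/- Let Γ be an n×n adjacency matrix over GF(2) and A, B, C, D diagonal matrices with AD + BC = I such that CΓ + D is invertible. Then the matrix (AΓ+B)(CΓ+D)^{-1} has zero diagonal if and only if Γ·v(AC) = v(BD), where v(AC) and v(BD) denote the vectors of diagonal entries of AC and BD respectively. -/
open Matrix

private lemma zmod2_mul_self : ∀ x : ZMod 2, x * x = x := by decide

private lemma dot_diag {n : ℕ} (e x : Fin n → ZMod 2) :
    x ⬝ᵥ (Matrix.diagonal e *ᵥ x) = e ⬝ᵥ x := by
  simp only [dotProduct, Matrix.mulVec_diagonal]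
  refine Finset.sum_congr rfl fun j _ => ?_
  calc x j * (e j * x j) = e j * (x j * x j) := by ring
    _ = e j * x j := by rw [zmod2_mul_self (x j)]

private lemma alt_zero {n : ℕ} (Γ : Matrix (Fin n) (Fin n) (ZMod 2)) (hsym : Γᵀ = Γ)
    (hdiag : ∀ i, Γ i i = 0) (x : Fin n → ZMod 2) :
    x ⬝ᵥ (Γ *ᵥ x) = 0 := by
  have hs : ∀ j k, Γ j k = Γ k j := fun j k => congrFun (congrFun hsym k) j
  simp only [dotProduct, Matrix.mulVec, dotProduct, Finset.mul_sum]
  rw [← Finset.sum_product']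
  refine Finset.sum_involution (fun p _ => (p.2, p.1)) ?_ ?_ ?_ ?_
  · intro p _
    have : x p.2 * (Γ p.2 p.1 * x p.1) = x p.1 * (Γ p.1 p.2 * x p.2) := by
      rw [hs p.2 p.1]; ring
    rw [this]
    exact CharTwo.add_self_eq_zero _
  · intro p _ hne heq
    apply hne
    have h1 : p.2 = p.1 := congrArg Prod.fst heq
    rw [h1, hdiag]; ring
  · intro p hp; exact Finset.mem_univ _
  · intro p _; rfl

private lemma quad_comm {n : ℕ} (Γ : Matrix (Fin n) (Fin n) (ZMod 2)) (hsym : Γᵀ = Γ)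
    (e : Fin n → ZMod 2) (x : Fin n → ZMod 2) :
    x ⬝ᵥ ((Γ * Matrix.diagonal e) *ᵥ x) = x ⬝ᵥ ((Matrix.diagonal e * Γ) *ᵥ x) := by
  have h : (Γ * Matrix.diagonal e)ᵀ = Matrix.diagonal e * Γ := by
    rw [Matrix.transpose_mul, Matrix.diagonal_transpose, hsym]
  calc x ⬝ᵥ ((Γ * Matrix.diagonal e) *ᵥ x)
      = (x ᵥ* (Γ * Matrix.diagonal e)) ⬝ᵥ x := by rw [Matrix.dotProduct_mulVec]
    _ = ((Γ * Matrix.diagonal e)ᵀ *ᵥ x) ⬝ᵥ x := by rw [Matrix.mulVec_transpose]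
    _ = x ⬝ᵥ ((Matrix.diagonal e * Γ) *ᵥ x) := by rw [h, dotProduct_comm]

private lemma key_quad {n : ℕ} (Γ : Matrix (Fin n) (Fin n) (ZMod 2))
    (a b c d : Fin n → ZMod 2)
    (hsym : Γᵀ = Γ) (hdiag : ∀ i, Γ i i = 0)
    (hQ : diagonal a * diagonal d + diagonal b * diagonal c = 1)
    (x : Fin n → ZMod 2) :
    x ⬝ᵥ (((Γ * diagonal c + diagonal d) * (diagonal a * Γ + diagonal b)) *ᵥ x)
      = (Γ *ᵥ (fun i => a i * c i) + (fun i => b i * d i)) ⬝ᵥ x := by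
  have hy : ∀ v : Fin n → ZMod 2, v ᵥ* Γ = Γ *ᵥ v := fun v => by
    conv_lhs => rw [← hsym]
    rw [Matrix.vecMul_transpose]
  have expand : (Γ * diagonal c + diagonal d) * (diagonal a * Γ + diagonal b)
      = Γ * diagonal (fun i => c i * a i) * Γ
        + (Γ * diagonal (fun i => c i * b i)
          + diagonal (fun i => d i * a i) * Γ)
        + diagonal (fun i => d i * b i) := by
    rw [← Matrix.diagonal_mul_diagonal c a, ← Matrix.diagonal_mul_diagonal c b,
      ← Matrix.diagonal_mul_diagonal d a, ← Matrix.diagonal_mul_diagonal d b]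
    noncomm_ring
  rw [expand, Matrix.add_mulVec, Matrix.add_mulVec, dotProduct_add,
    dotProduct_add]
  -- middle term vanishes
  have h1diag : Matrix.diagonal (fun i => c i * b i) + Matrix.diagonal (fun i => d i * a i)
      = 1 := by
    rw [Matrix.diagonal_mul_diagonal, Matrix.diagonal_mul_diagonal,
      Matrix.diagonal_add] at hQ
    rw [Matrix.diagonal_add,
      show (fun i => c i * b i + d i * a i) = (fun i => a i * d i + b i * c i) from
        funext fun i => by ring]
    exact hQ
  have h23 : x ⬝ᵥ ((Γ * diagonal (fun i => c i * b i)
      + diagonal (fun i => d i * a i) * Γ) *ᵥ x) = 0 := by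
    rw [Matrix.add_mulVec, dotProduct_add,
      quad_comm Γ hsym (fun i => c i * b i) x, ← dotProduct_add,
      ← Matrix.add_mulVec, ← Matrix.add_mul, h1diag, Matrix.one_mul]
    exact alt_zero Γ hsym hdiag x
  rw [h23]
  -- first term
  have h1 : x ⬝ᵥ ((Γ * diagonal (fun i => c i * a i) * Γ) *ᵥ x)
      = (Γ *ᵥ (fun i => a i * c i)) ⬝ᵥ x := by
    rw [show (fun i => c i * a i) = (fun i => a i * c i) from funext fun i => mul_comm _ _,
      ← Matrix.mulVec_mulVec, ← Matrix.mulVec_mulVec,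
      Matrix.dotProduct_mulVec, hy x, dot_diag,
      Matrix.dotProduct_mulVec _ Γ x, hy (fun i => a i * c i)]
  -- last term
  have h4 : x ⬝ᵥ (diagonal (fun i => d i * b i) *ᵥ x)
      = (fun i => b i * d i) ⬝ᵥ x := by
    rw [dot_diag]
    congr 1
    funext i; ring
  rw [h1, h4, add_zero, add_dotProduct]

theorem lft_zero_diagonal_iff {n : ℕ} (Γ : Matrix (Fin n) (Fin n) (ZMod 2))
    (a b c d : Fin n → ZMod 2)
    (hsym : Γᵀ = Γ) (hdiag : ∀ i, Γ i i = 0)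
    (hQ : diagonal a * diagonal d + diagonal b * diagonal c = 1)
    (hinv : IsUnit (diagonal c * Γ + diagonal d)) :
    (∀ i, ((diagonal a * Γ + diagonal b) * (diagonal c * Γ + diagonal d)⁻¹) i i = 0) ↔
      Γ.mulVec (fun i => a i * c i) = (fun i => b i * d i) := by
  set N : Matrix (Fin n) (Fin n) (ZMod 2) := diagonal c * Γ + diagonal d with hN
  set P : Matrix (Fin n) (Fin n) (ZMod 2) := diagonal a * Γ + diagonal b with hP
  set w : Fin n → ZMod 2 := Γ *ᵥ (fun i => a i * c i) + (fun i => b i * d i) with hw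
  have hdet : IsUnit N.det := (Matrix.isUnit_iff_isUnit_det N).mp hinv
  have hNT : Nᵀ = Γ * diagonal c + diagonal d := by
    rw [hN, Matrix.transpose_add, Matrix.transpose_mul, Matrix.diagonal_transpose,
      Matrix.diagonal_transpose, hsym]
  have hdiagM : ∀ i, (P * N⁻¹) i i = w ⬝ᵥ (fun j => N⁻¹ j i) := by
    intro i
    set x : Fin n → ZMod 2 := fun j => N⁻¹ j i with hx
    have hNx : N *ᵥ x = Pi.single i 1 := by
      funext k
      have : (N *ᵥ x) k = (N * N⁻¹) k i := by
        simp [Matrix.mulVec, Matrix.mul_apply, dotProduct, hx]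
      rw [this, Matrix.mul_nonsing_inv N hdet, Matrix.one_apply, Pi.single_apply]
    calc (P * N⁻¹) i i = (P *ᵥ x) i := by
          simp [Matrix.mul_apply, Matrix.mulVec, dotProduct, hx]
      _ = Pi.single i 1 ⬝ᵥ (P *ᵥ x) := by rw [single_dotProduct, one_mul]
      _ = (N *ᵥ x) ⬝ᵥ (P *ᵥ x) := by rw [hNx]
      _ = (x ᵥ* Nᵀ) ⬝ᵥ (P *ᵥ x) := by rw [Matrix.vecMul_transpose]
      _ = x ⬝ᵥ (Nᵀ *ᵥ (P *ᵥ x)) := by rw [← Matrix.dotProduct_mulVec]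
      _ = x ⬝ᵥ ((Nᵀ * P) *ᵥ x) := by rw [Matrix.mulVec_mulVec]
      _ = w ⬝ᵥ x := by rw [hNT]; exact key_quad Γ a b c d hsym hdiag hQ x
  have step : (∀ i, (P * N⁻¹) i i = 0) ↔ w = 0 := by
    constructor
    · intro h
      have hvm : w ᵥ* N⁻¹ = 0 := by
        funext i
        have := h i
        rw [hdiagM i] at this
        simpa [Matrix.vecMul, dotProduct] using this
      have hww : w ᵥ* N⁻¹ ᵥ* N = w := by
        rw [Matrix.vecMul_vecMul, Matrix.nonsing_inv_mul N hdet, Matrix.vecMul_one]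
      rw [hvm, Matrix.zero_vecMul] at hww
      exact hww.symm
    · intro h i
      rw [hdiagM i, h, zero_dotProduct]
  rw [step]
  constructor
  · intro h
    funext i
    have hi := congrFun h i
    simp only [hw, Pi.add_apply, Pi.zero_apply] at hi
    have h2 : ∀ u v : ZMod 2, u + v = 0 → u = v := by decide
    exact h2 _ _ hi
  · intro h
    rw [hw, h]
    funext i
    simp only [Pi.add_apply, Pi.zero_apply]
    exact CharTwo.add_self_eq_zero _
end

section
/- Let Γ be an n×n adjacency matrix over GF(2), let C, D be diagonal matrices over GF(2) such that D restricted to the complement of supp(C) is the identity (i.e., D_{ii} = 1 whenever C_{ii} = 0), and let ω = supp(C) = {i : C_{ii} = 1}. Then CΓ + D is invertible over GF(2) if and only if the principal submatrix Γ[ω] + D[ω] is invertible. -/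
open Matrix

theorem invertible_iff_principal_submatrix {n : ℕ}
    (Γ : Matrix (Fin n) (Fin n) (ZMod 2)) (c d : Fin n → ZMod 2)
    (hsym : Γᵀ = Γ) (hdiag : ∀ i, Γ i i = 0)
    (hcd : ∀ i, c i = 0 → d i = 1) :
    IsUnit (diagonal c * Γ + diagonal d) ↔
      IsUnit ((Γ + diagonal d).submatrix
        (Subtype.val : {i : Fin n // c i = 1} → Fin n)
        (Subtype.val : {i : Fin n // c i = 1} → Fin n)) := by
  classical
  have hzero : ∀ x : ZMod 2, x ≠ 1 → x = 0 := by decide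
  set A := (Γ + diagonal d).submatrix
      (Subtype.val : {i : Fin n // c i = 1} → Fin n)
      (Subtype.val : {i : Fin n // c i = 1} → Fin n) with hA
  let e := Equiv.sumCompl (fun i : Fin n => c i = 1)
  have key : (diagonal c * Γ + diagonal d).submatrix e e =
      Matrix.fromBlocks A
        (Γ.submatrix (Subtype.val : {i : Fin n // c i = 1} → Fin n)
          (Subtype.val : {i : Fin n // ¬ c i = 1} → Fin n)) 0 1 := by
    ext i j
    have entry : ∀ i j : Fin n, (diagonal c * Γ + diagonal d) i j
        = c i * Γ i j + (if i = j then d i else 0) := by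
      intro i j
      simp [Matrix.add_apply, Matrix.diagonal_mul, Matrix.diagonal_apply]
    rcases i with i | i <;> rcases j with j | j
    · simp only [Matrix.submatrix_apply, Matrix.fromBlocks_apply₁₁, e,
        Equiv.sumCompl_apply_inl, entry, hA, Matrix.submatrix_apply,
        Matrix.add_apply, Matrix.diagonal_apply, i.2, one_mul]
    · have hne : (i : Fin n) ≠ j := fun h => j.2 (h ▸ i.2)
      simp [e, entry, hne, i.2]
    · have hne : (i : Fin n) ≠ j := fun h => i.2 (h ▸ j.2)
      simp [e, entry, hne, hzero _ i.2]
    · have hd : d i = 1 := hcd _ (hzero _ i.2)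
      by_cases h : i = j
      · subst h
        simp [e, entry, hzero _ i.2, hd, Matrix.one_apply]
      · have hne : (i : Fin n) ≠ j := fun hv => h (Subtype.ext hv)
        simp [e, entry, hne, Matrix.one_apply, h, hzero _ i.2]
  rw [Matrix.isUnit_iff_isUnit_det, Matrix.isUnit_iff_isUnit_det,
    ← Matrix.det_submatrix_equiv_self e, key, Matrix.det_fromBlocks_zero₂₁,
    Matrix.det_one, mul_one]
end

section
/- Let Γ be an n×n adjacency matrix over GF(2), let A be a diagonal matrix over GF(2), and let ω = supp(A). Then AΓ + A + I is invertible over GF(2) if and only if the principal submatrix Γ[ω] is invertible over GF(2). -/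
open Matrix

theorem invertible_iff_principal_submatrix' {n : ℕ}
    (Γ : Matrix (Fin n) (Fin n) (ZMod 2)) (a : Fin n → ZMod 2)
    (hsym : Γᵀ = Γ) (hdiag : ∀ i, Γ i i = 0) :
    IsUnit (diagonal a * Γ + diagonal a + 1) ↔
      IsUnit (Γ.submatrix
        (Subtype.val : {i : Fin n // a i = 1} → Fin n)
        (Subtype.val : {i : Fin n // a i = 1} → Fin n)) := by
  classical
  set M := diagonal a * Γ + diagonal a + 1 with hMdef
  have hzmod : ∀ x : ZMod 2, x = 0 ∨ x = 1 := by decide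
  have hM : ∀ i j, M i j = if a i = 1 then Γ i j else if i = j then (1 : ZMod 2) else 0 := by
    intro i j
    have : M i j = a i * Γ i j + (diagonal a i j + (1 : Matrix (Fin n) (Fin n) (ZMod 2)) i j) := by
      simp [hMdef, Matrix.add_apply, Matrix.mul_apply, Matrix.diagonal_apply,
        Finset.mul_sum, ite_mul, Finset.sum_ite_eq, add_assoc]
    rw [this]
    rcases hzmod (a i) with h0 | h1
    · have hne : ¬ a i = 1 := by rw [h0]; decide
      by_cases hij : i = j
      · subst hij
        simp [h0, hne, Matrix.one_apply, Matrix.diagonal_apply]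
      · simp [h0, hne, hij, Matrix.one_apply, Matrix.diagonal_apply]
    · by_cases hij : i = j
      · subst hij
        simp [h1, hdiag i, Matrix.one_apply, Matrix.diagonal_apply]
        decide
      · simp [h1, hij, Matrix.one_apply, Matrix.diagonal_apply]
  set e := Equiv.sumCompl (fun i : Fin n => a i = 1) with he
  have hblock : M.submatrix e e =
      Matrix.fromBlocks
        (Γ.submatrix (Subtype.val : {i : Fin n // a i = 1} → Fin n)
          (Subtype.val : {i : Fin n // a i = 1} → Fin n))
        (Γ.submatrix (Subtype.val : {i : Fin n // a i = 1} → Fin n)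
          (Subtype.val : {i : Fin n // ¬ a i = 1} → Fin n))
        0 (1 : Matrix {i : Fin n // ¬ a i = 1} {i : Fin n // ¬ a i = 1} (ZMod 2)) := by
    ext i j
    have hne : ∀ (i : {x : Fin n // ¬ a x = 1}) (j : {x : Fin n // a x = 1}),
        (i : Fin n) ≠ (j : Fin n) := fun i j h => i.2 (h ▸ j.2)
    rcases i with i | i <;> rcases j with j | j <;>
      simp [Matrix.submatrix_apply, he, hM, i.2, hne, Matrix.one_apply, Subtype.ext_iff]
  have hdet : M.det = (Γ.submatrix (Subtype.val : {i : Fin n // a i = 1} → Fin n)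
      (Subtype.val : {i : Fin n // a i = 1} → Fin n)).det := by
    rw [← Matrix.det_submatrix_equiv_self e M, hblock,
      Matrix.det_fromBlocks_zero₂₁, Matrix.det_one, mul_one]
  rw [Matrix.isUnit_iff_isUnit_det, Matrix.isUnit_iff_isUnit_det, hdet]
end

section
/- Let Γ be an n×n adjacency matrix over GF(2), A a diagonal matrix with ω = supp(A), and suppose AΓ + A + I is invertible. Let Γ' = ((A+I)Γ + A)(AΓ + A + I)^{-1}. Then, after partitioning indices into ω and its complement: Γ'[ω] = Γ[ω]^{-1}; the off-diagonal block Γ'⟨ω⟩ = Γ[ω]^{-1} Γ⟨ω⟩; and Γ'[ω̄] = Γ[ω̄] + Γ⟨ω⟩^T Γ[ω]^{-1} Γ⟨ω⟩. -/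
open Matrix

theorem lft_block_structure {n : ℕ} (Γ : Matrix (Fin n) (Fin n) (ZMod 2))
    (a : Fin n → ZMod 2)
    (hsym : Γᵀ = Γ) (hdiag : ∀ i, Γ i i = 0)
    (hinv : IsUnit (diagonal a * Γ + diagonal a + 1)) :
    let Γ' := ((diagonal a + 1) * Γ + diagonal a) * (diagonal a * Γ + diagonal a + 1)⁻¹
    let inω : {i : Fin n // a i = 1} → Fin n := Subtype.val
    let outω : {i : Fin n // ¬ a i = 1} → Fin n := Subtype.val
    Γ'.submatrix inω inω = (Γ.submatrix inω inω)⁻¹ ∧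
    Γ'.submatrix inω outω = (Γ.submatrix inω inω)⁻¹ * Γ.submatrix inω outω ∧
    Γ'.submatrix outω outω = Γ.submatrix outω outω +
      (Γ.submatrix inω outω)ᵀ * (Γ.submatrix inω inω)⁻¹ * Γ.submatrix inω outω := by
  intro Γ' inω outω
  classical
  have hz2 : ∀ x : ZMod 2, x + x = 0 := by decide
  have ha0 : ∀ i, ¬ a i = 1 → a i = 0 := by
    intro i h
    revert h; generalize a i = x; revert x; decide
  let e : {i : Fin n // a i = 1} ⊕ {i : Fin n // ¬ a i = 1} ≃ Fin n :=
    Equiv.sumCompl (fun i => a i = 1)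
  set M := diagonal a * Γ + diagonal a + 1 with hMdef
  set N := (diagonal a + 1) * Γ + diagonal a with hNdef
  set Γ11 := Γ.submatrix inω inω with hΓ11
  set Γ12 := Γ.submatrix inω outω with hΓ12
  set Γ21 := Γ.submatrix outω inω with hΓ21
  set Γ22 := Γ.submatrix outω outω with hΓ22
  have hM : M.submatrix e e = fromBlocks Γ11 Γ12 0 1 := by
    ext i j
    rcases i with i | i <;> rcases j with j | j <;>
      simp only [submatrix_apply, fromBlocks_apply₁₁, fromBlocks_apply₁₂,
        fromBlocks_apply₂₁, fromBlocks_apply₂₂, hMdef, Matrix.add_apply,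
        Matrix.diagonal_mul, Matrix.diagonal_apply, Matrix.one_apply,
        Equiv.sumCompl_apply_inl, Equiv.sumCompl_apply_inr, e, hΓ11, hΓ12,
        Matrix.zero_apply, inω, outω]
    · rw [i.2]
      by_cases h : (i : Fin n) = (j : Fin n)
      · have : i = j := Subtype.ext h
        simp [h, this, add_assoc, hz2 1]
      · have : i ≠ j := fun hij => h (congrArg Subtype.val hij)
        simp [h, this]
    · have h : (i : Fin n) ≠ (j : Fin n) := fun hij => j.2 (hij ▸ i.2)
      simp [h, i.2]
    · have h : (i : Fin n) ≠ (j : Fin n) := fun hij => i.2 (hij ▸ j.2)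
      simp [h, ha0 _ i.2]
    · by_cases h : (i : Fin n) = (j : Fin n)
      · have : i = j := Subtype.ext h
        simp [h, this, ha0 _ i.2, ha0 _ j.2, hz2]
      · have : i ≠ j := fun hij => h (congrArg Subtype.val hij)
        simp [h, this, ha0 _ i.2, ha0 _ j.2]
  have hN : N.submatrix e e = fromBlocks 1 0 Γ21 Γ22 := by
    ext i j
    rcases i with i | i <;> rcases j with j | j <;>
      simp only [submatrix_apply, fromBlocks_apply₁₁, fromBlocks_apply₁₂,
        fromBlocks_apply₂₁, fromBlocks_apply₂₂, hNdef, Matrix.add_apply,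
        Matrix.add_mul, Matrix.diagonal_mul, Matrix.one_mul,
        Matrix.diagonal_apply, Matrix.one_apply,
        Equiv.sumCompl_apply_inl, Equiv.sumCompl_apply_inr, e, hΓ21, hΓ22,
        Matrix.zero_apply, inω, outω]
    · by_cases h : (i : Fin n) = (j : Fin n)
      · have : i = j := Subtype.ext h
        simp [h, this, i.2, j.2, hz2, add_assoc]
      · have : i ≠ j := fun hij => h (congrArg Subtype.val hij)
        simp [h, this, i.2, j.2, hz2]
    · have h : (i : Fin n) ≠ (j : Fin n) := fun hij => j.2 (hij ▸ i.2)
      simp [h, i.2, hz2]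
    · have h : (i : Fin n) ≠ (j : Fin n) := fun hij => i.2 (hij ▸ j.2)
      simp [h, ha0 _ i.2]
    · by_cases h : (i : Fin n) = (j : Fin n)
      · have : i = j := Subtype.ext h
        simp [h, this, ha0 _ i.2, ha0 _ j.2]
      · have : i ≠ j := fun hij => h (congrArg Subtype.val hij)
        simp [h, this, ha0 _ i.2, ha0 _ j.2]
  -- invertibility of Γ11
  have hdetM : IsUnit M.det := (Matrix.isUnit_iff_isUnit_det M).mp hinv
  have hdet11 : IsUnit Γ11.det := by
    have := Matrix.det_submatrix_equiv_self e M
    rw [hM, Matrix.det_fromBlocks_zero₂₁, Matrix.det_one, mul_one] at this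
    rwa [this]
  have h11l : Γ11⁻¹ * Γ11 = 1 := Matrix.nonsing_inv_mul _ hdet11
  have h11r : Γ11 * Γ11⁻¹ = 1 := Matrix.mul_nonsing_inv _ hdet11
  -- key block identity
  set T := fromBlocks Γ11⁻¹ (Γ11⁻¹ * Γ12) (Γ21 * Γ11⁻¹) (Γ22 + Γ21 * Γ11⁻¹ * Γ12) with hT
  have hTM : T * M.submatrix e e = N.submatrix e e := by
    have haddXY : ∀ (X Y : Matrix {i : Fin n // ¬ a i = 1} {i : Fin n // ¬ a i = 1} (ZMod 2)),
        X + (Y + X) = Y := by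
      intro X Y
      ext i j
      simp only [Matrix.add_apply]
      rw [add_comm (Y i j), ← add_assoc, hz2, zero_add]
    have hadd12 : ∀ (X : Matrix {i : Fin n // a i = 1} {i : Fin n // ¬ a i = 1} (ZMod 2)),
        X + X = 0 := by
      intro X
      ext i j
      exact hz2 _
    rw [hM, hN, hT, Matrix.fromBlocks_multiply]
    simp only [Matrix.mul_zero, Matrix.mul_one, add_zero, Matrix.mul_assoc, h11l, hadd12, haddXY]
  have hMsubdet : IsUnit (M.submatrix e e).det := by
    rwa [Matrix.det_submatrix_equiv_self]
  have hGsub : Γ'.submatrix e e = T := by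
    have h1 : Γ'.submatrix e e = N.submatrix e e * (M.submatrix e e)⁻¹ := by
      rw [Matrix.inv_submatrix_equiv]
      rw [← Matrix.submatrix_mul_equiv N M⁻¹ _ e _]
    rw [h1, ← hTM, Matrix.mul_assoc, Matrix.mul_nonsing_inv _ hMsubdet, Matrix.mul_one]
  refine ⟨?_, ?_, ?_⟩
  · ext i j
    have := congrFun (congrFun hGsub (Sum.inl i)) (Sum.inl j)
    simpa [e, hT, inω] using this
  · ext i j
    have := congrFun (congrFun hGsub (Sum.inl i)) (Sum.inr j)
    simpa [e, hT, inω, outω] using this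
  · ext i j
    have := congrFun (congrFun hGsub (Sum.inr i)) (Sum.inr j)
    have htr : Γ12ᵀ = Γ21 := by
      rw [hΓ12, hΓ21, Matrix.transpose_submatrix, hsym]
    simp only [e, hT, Equiv.sumCompl_apply_inr, submatrix_apply,
      fromBlocks_apply₂₂] at this
    rw [Matrix.add_apply] at this ⊢
    rw [htr]
    exact this
end

section
/- Let Γ be an n×n adjacency matrix over GF(2) and A, B diagonal matrices over GF(2). Suppose AΓ + A + I is invertible, Γ' := ((A+I)Γ + A)(AΓ + A + I)^{-1}, and BΓ' + B + I is invertible. Then (A+B)Γ + (A+B) + I is invertible and ((B+I)Γ' + B)(BΓ' + B + I)^{-1} = (((A+B)+I)Γ + (A+B))((A+B)Γ + (A+B) + I)^{-1}. -/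
open Matrix

theorem lft_composition {n : ℕ} (Γ : Matrix (Fin n) (Fin n) (ZMod 2))
    (a b : Fin n → ZMod 2)
    (hsym : Γᵀ = Γ) (hdiag : ∀ i, Γ i i = 0)
    (hA : IsUnit (diagonal a * Γ + diagonal a + 1))
    (Γ' : Matrix (Fin n) (Fin n) (ZMod 2))
    (hΓ' : Γ' = ((diagonal a + 1) * Γ + diagonal a) * (diagonal a * Γ + diagonal a + 1)⁻¹)
    (hB : IsUnit (diagonal b * Γ' + diagonal b + 1)) :
    IsUnit (diagonal (a + b) * Γ + diagonal (a + b) + 1) ∧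
      ((diagonal b + 1) * Γ' + diagonal b) * (diagonal b * Γ' + diagonal b + 1)⁻¹ =
        ((diagonal (a + b) + 1) * Γ + diagonal (a + b)) *
          (diagonal (a + b) * Γ + diagonal (a + b) + 1)⁻¹ := by
  have h0 : ∀ X : Matrix (Fin n) (Fin n) (ZMod 2), X + X = 0 := fun X => by
    ext i j; rw [Matrix.add_apply]; exact CharTwo.add_self_eq_zero _
  set A := diagonal a with hAdef
  set B := diagonal b with hBdef
  set M := A * Γ + A + 1 with hMdef
  set N := B * Γ' + B + 1 with hNdef
  have hAB : diagonal (a + b) = A + B := (diagonal_add a b).symm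
  have hMM : M * M⁻¹ = 1 := mul_nonsing_inv _ ((isUnit_iff_isUnit_det _).mp hA)
  -- Γ' + 1 = (Γ + 1) * M⁻¹
  have key : Γ' + 1 = (Γ + 1) * M⁻¹ := by
    have e1 : (A + 1) * Γ + A = (Γ + 1) + M := by
      rw [hMdef, add_mul, one_mul]; abel_nf; simp [two_smul, h0]
    rw [hΓ', e1, add_mul, hMM]
    abel_nf; simp [two_smul, h0]
  -- N * M = M_{A+B}
  have hNM : N * M = (A + B) * Γ + (A + B) + 1 := by
    have e2 : N = (B * (Γ + 1)) * M⁻¹ + 1 := by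
      rw [hNdef]
      have : Γ' = (Γ + 1) * M⁻¹ + 1 := by
        have := key; rw [← this]; abel_nf; simp [two_smul, h0]
      rw [this, mul_add, mul_one, ← mul_assoc]
      abel_nf; simp [two_smul, h0]
    rw [e2, add_mul, one_mul, mul_assoc, nonsing_inv_mul _ ((isUnit_iff_isUnit_det _).mp hA),
      mul_one, hMdef]
    noncomm_ring
  have hUnit : IsUnit ((A + B) * Γ + (A + B) + 1) := by
    rw [← hNM]; exact hB.mul hA
  refine ⟨by rw [hAB]; exact hUnit, ?_⟩
  have hNN : N * N⁻¹ = 1 := mul_nonsing_inv _ ((isUnit_iff_isUnit_det _).mp hB)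
  -- LHS = (Γ' + 1) * N⁻¹ + 1
  have eL : ((B + 1) * Γ' + B) = (Γ' + 1) + N := by
    rw [hNdef, add_mul, one_mul]; abel_nf; simp [two_smul, h0]
  have eR : ((A + B + 1) * Γ + (A + B)) = (Γ + 1) + ((A + B) * Γ + (A + B) + 1) := by
    rw [add_mul, one_mul]; abel_nf; simp [two_smul, h0]
  have hNMu : IsUnit (N * M) := hB.mul hA
  have hNMinv : (N * M) * (N * M)⁻¹ = 1 :=
    mul_nonsing_inv _ ((isUnit_iff_isUnit_det _).mp hNMu)
  rw [hAB, eL, eR, ← hNM, add_mul, add_mul, hNN, add_mul _ (N * M), hNMinv,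
    Matrix.mul_inv_rev, ← mul_assoc, ← key, add_mul]
end

section
/- Let Γ be an n×n adjacency matrix over GF(2) with Γ invertible. Then taking A = I in the linear fractional transformation gives H^I(Γ) = (0·Γ + I)(I·Γ + 0)^{-1} = Γ^{-1}, and moreover Γ^{-1} is again an adjacency matrix (symmetric with zero diagonal). -/
open Matrix

lemma alt_form {n : ℕ} (Γ : Matrix (Fin n) (Fin n) (ZMod 2))
    (hsym : Γᵀ = Γ) (hdiag : ∀ i, Γ i i = 0) (x : Fin n → ZMod 2) :
    x ⬝ᵥ Γ.mulVec x = 0 := by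
  have hs : ∀ i j, Γ j i = Γ i j := fun i j => by
    conv_lhs => rw [← hsym]
    rfl
  simp only [dotProduct, mulVec, Finset.mul_sum]
  rw [← Finset.sum_product']
  refine Finset.sum_ninvolution (fun p => (p.2, p.1)) ?_ ?_ (by simp) (by simp)
  · intro ⟨i, j⟩
    show x i * (Γ i j * x j) + x j * (Γ j i * x i) = 0
    rw [hs i j]
    ring_nf
    rw [show (2 : ZMod 2) = 0 from rfl, mul_zero]
  · intro ⟨i, j⟩ h
    simp only [Ne, Prod.mk.injEq, not_and]
    intro hji
    exfalso
    apply h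
    subst hji
    simp [hdiag]

theorem lft_identity_gives_inverse {n : ℕ} (Γ : Matrix (Fin n) (Fin n) (ZMod 2))
    (hsym : Γᵀ = Γ) (hdiag : ∀ i, Γ i i = 0) (hinv : IsUnit Γ) :
    ((1 + 1) * Γ + 1) * (1 * Γ + 1 + 1)⁻¹ = Γ⁻¹ ∧
      (Γ⁻¹)ᵀ = Γ⁻¹ ∧ ∀ i, Γ⁻¹ i i = 0 := by
  have h2 : (1 + 1 : Matrix (Fin n) (Fin n) (ZMod 2)) = 0 := by
    ext i j
    simp [Matrix.one_apply]
    split <;> rfl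
  have hΓinv : Γ * Γ⁻¹ = 1 :=
    mul_nonsing_inv Γ ((isUnit_iff_isUnit_det Γ).mp hinv)
  refine ⟨?_, ?_, ?_⟩
  · rw [one_mul, add_assoc, h2, add_zero, zero_mul, zero_add, one_mul]
  · rw [Matrix.transpose_nonsing_inv, hsym]
  · intro i
    have key := alt_form Γ hsym hdiag (Γ⁻¹.mulVec (Pi.single i 1))
    rw [Matrix.mulVec_mulVec, hΓinv, Matrix.one_mulVec] at key
    rw [dotProduct_single, mul_one, Matrix.mulVec_single] at key
    simpa using key
end

section
/- Let G and G' be graphs with adjacency matrices Γ, Γ' over GF(2), related by Γ' = H^A(Γ) = ((A+I)Γ+A)(AΓ+A+I)^{-1} for some diagonal matrix A with AΓ+A+I invertible. If distinct vertices i and j are twins of G (i.e., {i,j} is an edge and columns i and j of Γ+I coincide), then i and j are twins of G'. -/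
/-!
Twins `i, j` are exactly the vertices with `eᵢ + eⱼ ∈ ker (Γ + 1)`. On this kernel `Γ` acts as `-1`,
so `A Γ + A + 1` fixes it, hence so does its inverse, while `(A + 1) Γ + A` acts as `-1`;
thus `Γ' = H^A(Γ)` acts as `-1` there too, i.e. `ker (Γ + 1) ⊆ ker (Γ' + 1)`.
-/

open Matrix

namespace Matrix

variable {ι R : Type*} [Fintype ι] [DecidableEq ι]

noncomputable def hTransform [CommRing R] (A Γ : Matrix ι ι R) : Matrix ι ι R :=
  ((A + 1) * Γ + A) * (A * Γ + A + 1)⁻¹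

theorem inv_mulVec_eq_self_of_mulVec_eq_self [CommRing R] {B : Matrix ι ι R} (hB : IsUnit B)
    {v : ι → R} (h : B *ᵥ v = v) : B⁻¹ *ᵥ v = v := by
  conv_lhs => rw [← h]
  rw [mulVec_mulVec, nonsing_inv_mul B ((isUnit_iff_isUnit_det B).mp hB), one_mulVec]

theorem hTransform_add_one_mulVec_eq_zero [CommRing R] {A Γ : Matrix ι ι R}
    (hB : IsUnit (A * Γ + A + 1)) {v : ι → R} (hv : (Γ + 1) *ᵥ v = 0) :
    (hTransform A Γ + 1) *ᵥ v = 0 := by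
  have hΓv : Γ *ᵥ v = -v := by
    rwa [add_mulVec, one_mulVec, add_eq_zero_iff_eq_neg] at hv
  have hBv : (A * Γ + A + 1) *ᵥ v = v := by
    rw [add_mulVec, add_mulVec, ← mulVec_mulVec, hΓv, mulVec_neg, one_mulVec, neg_add_cancel,
      zero_add]
  have hNv : ((A + 1) * Γ + A) *ᵥ v = -v := by
    rw [add_mulVec, ← mulVec_mulVec, hΓv, mulVec_neg, add_mulVec, one_mulVec]
    abel
  rw [hTransform, add_mulVec, ← mulVec_mulVec, inv_mulVec_eq_self_of_mulVec_eq_self hB hBv, hNv,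
    one_mulVec, neg_add_cancel]

theorem mulVec_single_add_single_eq_zero_iff [Ring R] [CharP R 2] (N : Matrix ι ι R) (i j : ι) :
    N *ᵥ (Pi.single i 1 + Pi.single j 1) = 0 ↔ ∀ k, N k i = N k j := by
  simp only [funext_iff, mulVec_add, mulVec_single_one, Pi.add_apply, col_apply, Pi.zero_apply,
    CharTwo.add_eq_zero]

end Matrix

theorem twins_invariant_general {n : ℕ} (Γ Γ' : Matrix (Fin n) (Fin n) (ZMod 2))
    (a : Fin n → ZMod 2)
    (hdiag' : ∀ i, Γ' i i = 0)
    (hinv : IsUnit (diagonal a * Γ + diagonal a + 1))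
    (hΓ' : Γ' = ((diagonal a + 1) * Γ + diagonal a) * (diagonal a * Γ + diagonal a + 1)⁻¹)
    (i j : Fin n) (hij : i ≠ j)
    (htwin : ∀ k, (Γ + 1) k i = (Γ + 1) k j) :
    Γ' i j = 1 ∧ ∀ k, (Γ' + 1) k i = (Γ' + 1) k j := by
  have hker := (mulVec_single_add_single_eq_zero_iff (Γ + 1) i j).mpr htwin
  have hcol : ∀ k, (Γ' + 1) k i = (Γ' + 1) k j := by
    rw [← mulVec_single_add_single_eq_zero_iff, hΓ']
    exact hTransform_add_one_mulVec_eq_zero hinv hker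
  refine ⟨?_, hcol⟩
  simpa [hdiag' i, hij] using (hcol i).symm

theorem twins_invariant {n : ℕ} (Γ Γ' : Matrix (Fin n) (Fin n) (ZMod 2))
    (a : Fin n → ZMod 2)
    (hsym : Γᵀ = Γ) (hdiag : ∀ i, Γ i i = 0)
    (hsym' : Γ'ᵀ = Γ') (hdiag' : ∀ i, Γ' i i = 0)
    (hinv : IsUnit (diagonal a * Γ + diagonal a + 1))
    (hΓ' : Γ' = ((diagonal a + 1) * Γ + diagonal a) * (diagonal a * Γ + diagonal a + 1)⁻¹)
    (i j : Fin n) (hij : i ≠ j)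
    (hedge : Γ i j = 1) (htwin : ∀ k, (Γ + 1) k i = (Γ + 1) k j) :
    Γ' i j = 1 ∧ ∀ k, (Γ' + 1) k i = (Γ' + 1) k j :=
  twins_invariant_general Γ Γ' a hdiag' hinv hΓ' i j hij htwin
end

section
/- Let Γ, Γ' be n×n adjacency matrices over GF(2) and A a diagonal matrix with AΓ+A+I invertible and Γ' = ((A+I)Γ+A)(AΓ+A+I)^{-1}. Then ker(Γ+I) = ker(Γ'+I); in particular rank(Γ+I) = rank(Γ'+I). -/
open Matrix

theorem kernel_invariant {n : ℕ} (Γ Γ' : Matrix (Fin n) (Fin n) (ZMod 2))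
    (a : Fin n → ZMod 2)
    (hsym : Γᵀ = Γ) (hdiag : ∀ i, Γ i i = 0)
    (hsym' : Γ'ᵀ = Γ') (hdiag' : ∀ i, Γ' i i = 0)
    (hinv : IsUnit (diagonal a * Γ + diagonal a + 1))
    (hΓ' : Γ' = ((diagonal a + 1) * Γ + diagonal a) * (diagonal a * Γ + diagonal a + 1)⁻¹) :
    (∀ x : Fin n → ZMod 2, (Γ + 1).mulVec x = 0 ↔ (Γ' + 1).mulVec x = 0) ∧
      (Γ + 1).rank = (Γ' + 1).rank := by
  set D := diagonal a with hD
  set M := D * Γ + D + 1 with hM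
  have addselfM : ∀ X : Matrix (Fin n) (Fin n) (ZMod 2), X + X = 0 := by
    intro X; ext i j; simp [CharTwo.add_self_eq_zero]
  have addselfv : ∀ v : Fin n → ZMod 2, v + v = 0 := by
    intro v; funext i; simp [CharTwo.add_self_eq_zero]
  have hdet : IsUnit M.det := (Matrix.isUnit_iff_isUnit_det M).mp hinv
  have hdetInv : IsUnit M⁻¹.det := M.isUnit_nonsing_inv_det hdet
  have hMM : M * M⁻¹ = 1 := Matrix.mul_nonsing_inv M hdet
  have hMM' : M⁻¹ * M = 1 := Matrix.nonsing_inv_mul M hdet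
  have hsum : (D + 1) * Γ + D + M = Γ + 1 := by
    have h1 : (D + 1) * Γ + D + M = D * Γ + D * Γ + (D + D) + (Γ + 1) := by
      rw [hM, add_mul, one_mul]; abel
    rw [h1, addselfM, addselfM, zero_add, zero_add]
  have hfact : Γ' + 1 = (Γ + 1) * M⁻¹ := by
    calc Γ' + 1 = ((D + 1) * Γ + D) * M⁻¹ + M * M⁻¹ := by rw [hMM, ← hΓ']
    _ = ((D + 1) * Γ + D + M) * M⁻¹ := (add_mul _ _ _).symm
    _ = (Γ + 1) * M⁻¹ := by rw [hsum]
  have key : ∀ x : Fin n → ZMod 2, (Γ + 1).mulVec x = 0 → M.mulVec x = x := by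
    intro x hx
    have hΓx : Γ.mulVec x = x := by
      rw [add_mulVec, one_mulVec] at hx
      have h2 := eq_neg_of_add_eq_zero_left hx
      rw [h2]; funext i; simp [CharTwo.neg_eq]
    rw [hM, add_mulVec, add_mulVec, one_mulVec, ← Matrix.mulVec_mulVec, hΓx,
      addselfv, zero_add]
  have keyinv : ∀ x : Fin n → ZMod 2, (Γ + 1).mulVec x = 0 → M⁻¹.mulVec x = x := by
    intro x hx
    have h1 := key x hx
    have h2 : M⁻¹.mulVec (M.mulVec x) = M⁻¹.mulVec x := by rw [h1]
    rw [Matrix.mulVec_mulVec, hMM', one_mulVec] at h2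
    exact h2.symm
  constructor
  · intro x
    constructor
    · intro hx
      rw [hfact, ← Matrix.mulVec_mulVec, keyinv x hx]
      exact hx
    · intro hx
      rw [hfact, ← Matrix.mulVec_mulVec] at hx
      have h1 := key _ hx
      rw [Matrix.mulVec_mulVec, hMM, one_mulVec] at h1
      rwa [← h1] at hx
  · rw [hfact, Matrix.rank_mul_eq_left_of_isUnit_det M⁻¹ (Γ + 1) hdetInv]
end
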